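/- arXiv:2007.14735 — 2 statements merged into one kernel-verified Lean document; each statement's English description precedes it below -/
import Mathlib

section
/- For θ, θ₀ with 0 < θ < θ₀, the logarithmic potential Ψ_log(r) = (θ/2)((1+r)ln(1+r) + (1−r)ln(1−r)) − (θ₀/2)r² on (−1,1) has exactly two global minima, located symmetrically at ±r* for some r* ∈ (0,1), and Ψ_log''(r) ≥ −θ₀ for all r ∈ (−1,1). -/
open Real Set

namespace Stmt2Aux

noncomputable def f (θ θ₀ : ℝ) (r : ℝ) : ℝ :=
  (θ/2) * ((1 + r) * Real.log (1 + r) + (1 - r) * Real.log (1 - r)) - (θ₀/2) * r^2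

noncomputable def g (θ θ₀ : ℝ) (r : ℝ) : ℝ :=
  (θ/2) * (Real.log (1 + r) - Real.log (1 - r)) - θ₀ * r

lemma hasDerivAt_log1p {r : ℝ} (h1 : -1 < r) :
    HasDerivAt (fun x : ℝ => Real.log (1 + x)) (1 + r)⁻¹ r := by
  have hp : (0:ℝ) < 1 + r := by linarith
  have := (Real.hasDerivAt_log hp.ne').comp r ((hasDerivAt_id r).const_add 1)
  simpa [Function.comp_def] using this

lemma hasDerivAt_log1m {r : ℝ} (h2 : r < 1) :
    HasDerivAt (fun x : ℝ => Real.log (1 - x)) (-(1 - r)⁻¹) r := by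
  have hm : (0:ℝ) < 1 - r := by linarith
  have := (Real.hasDerivAt_log hm.ne').comp r ((hasDerivAt_id r).const_sub 1)
  simpa [Function.comp_def] using this

lemma hasDerivAt_f (θ θ₀ : ℝ) {r : ℝ} (h1 : -1 < r) (h2 : r < 1) :
    HasDerivAt (f θ θ₀) (g θ θ₀ r) r := by
  have hp : (0:ℝ) < 1 + r := by linarith
  have hm : (0:ℝ) < 1 - r := by linarith
  have d1 : HasDerivAt (fun x : ℝ => (1 + x) * Real.log (1 + x))
      (Real.log (1 + r) + 1) r := by
    have := ((hasDerivAt_id r).const_add 1).mul (hasDerivAt_log1p h1)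
    refine this.congr_deriv ?_
    rw [id_eq]
    field_simp
  have d2 : HasDerivAt (fun x : ℝ => (1 - x) * Real.log (1 - x))
      (-(Real.log (1 - r)) - 1) r := by
    have := ((hasDerivAt_id r).const_sub 1).mul (hasDerivAt_log1m h2)
    refine this.congr_deriv ?_
    rw [id_eq]
    field_simp
    ring
  have dsq : HasDerivAt (fun x : ℝ => (θ₀/2) * x^2) (θ₀ * r) r := by
    have := (hasDerivAt_pow 2 r).const_mul (θ₀/2)
    refine this.congr_deriv ?_
    ring
  have := ((d1.add d2).const_mul (θ/2)).sub dsq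
  refine this.congr_deriv ?_
  simp only [g]; ring

lemma hasDerivAt_g (θ θ₀ : ℝ) {r : ℝ} (h1 : -1 < r) (h2 : r < 1) :
    HasDerivAt (g θ θ₀) ((θ/2) * ((1 + r)⁻¹ + (1 - r)⁻¹) - θ₀) r := by
  have := (((hasDerivAt_log1p h1).sub (hasDerivAt_log1m h2)).const_mul (θ/2)).sub
    ((hasDerivAt_id r).const_mul θ₀)
  refine this.congr_deriv ?_
  ring

lemma g_zero (θ θ₀ : ℝ) : g θ θ₀ 0 = 0 := by simp [g]

lemma f_even (θ θ₀ r : ℝ) : f θ θ₀ (-r) = f θ θ₀ r := by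
  have e1 : 1 + -r = 1 - r := by ring
  have e2 : 1 - -r = 1 + r := by ring
  simp only [f]
  rw [e1, e2]
  ring

lemma contOn_g (θ θ₀ : ℝ) {s : Set ℝ} (hs : s ⊆ Ioo (-1:ℝ) 1) :
    ContinuousOn (g θ θ₀) s := fun x hx =>
  ((hasDerivAt_g θ θ₀ (hs hx).1 (hs hx).2).continuousAt).continuousWithinAt

lemma contOn_f (θ θ₀ : ℝ) {s : Set ℝ} (hs : s ⊆ Ioo (-1:ℝ) 1) :
    ContinuousOn (f θ θ₀) s := fun x hx =>
  ((hasDerivAt_f θ θ₀ (hs hx).1 (hs hx).2).continuousAt).continuousWithinAt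

lemma deriv_g_eq (θ θ₀ : ℝ) {r : ℝ} (h1 : -1 < r) (h2 : r < 1) :
    deriv (g θ θ₀) r = θ / (1 - r^2) - θ₀ := by
  rw [(hasDerivAt_g θ θ₀ h1 h2).deriv]
  have hp : (0:ℝ) < 1 + r := by linarith
  have hm : (0:ℝ) < 1 - r := by linarith
  have : (θ/2) * ((1 + r)⁻¹ + (1 - r)⁻¹) = θ / (1 - r^2) := by
    have h12 : 1 - r^2 = (1+r)*(1-r) := by ring
    rw [h12]
    field_simp
    ring
  rw [this]



end Stmt2Aux

open Stmt2Aux Set in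
/-- For `0 < θ < θ₀`, the logarithmic potential
`Ψ_log(r) = (θ/2)((1+r)ln(1+r) + (1−r)ln(1−r)) − (θ₀/2)r²` on `(−1,1)` has exactly two
global minima, located symmetrically at `±r*` for some `r* ∈ (0,1)`, and
`Ψ_log''(r) ≥ −θ₀` for all `r ∈ (−1,1)`. -/
theorem stmt2 (θ θ₀ : ℝ) (hθ : 0 < θ) (hθθ₀ : θ < θ₀) :
    ∃ rstar ∈ Set.Ioo (0:ℝ) 1,
      (∀ r ∈ Set.Ioo (-1:ℝ) 1,
        (θ/2) * ((1 + rstar) * Real.log (1 + rstar) + (1 - rstar) * Real.log (1 - rstar))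
            - (θ₀/2) * rstar^2
        ≤ (θ/2) * ((1 + r) * Real.log (1 + r) + (1 - r) * Real.log (1 - r))
            - (θ₀/2) * r^2) ∧
      ((θ/2) * ((1 + (-rstar)) * Real.log (1 + (-rstar))
            + (1 - (-rstar)) * Real.log (1 - (-rstar))) - (θ₀/2) * (-rstar)^2
        = (θ/2) * ((1 + rstar) * Real.log (1 + rstar) + (1 - rstar) * Real.log (1 - rstar))
            - (θ₀/2) * rstar^2) ∧
      (∀ r ∈ Set.Ioo (-1:ℝ) 1,
        (θ/2) * ((1 + r) * Real.log (1 + r) + (1 - r) * Real.log (1 - r)) - (θ₀/2) * r^2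
          = (θ/2) * ((1 + rstar) * Real.log (1 + rstar)
              + (1 - rstar) * Real.log (1 - rstar)) - (θ₀/2) * rstar^2
        → r = rstar ∨ r = -rstar) ∧
      (∀ r ∈ Set.Ioo (-1:ℝ) 1,
        -θ₀ ≤ iteratedDeriv 2
          (fun r : ℝ => (θ/2) * ((1 + r) * Real.log (1 + r) + (1 - r) * Real.log (1 - r))
            - (θ₀/2) * r^2) r) := by
  have hθ₀ : 0 < θ₀ := hθ.trans hθθ₀
  set a := Real.sqrt (1 - θ/θ₀) with ha_def
  have hfrac : 0 < 1 - θ/θ₀ := by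
    rw [sub_pos, div_lt_one hθ₀]; exact hθθ₀
  have hfrac1 : 1 - θ/θ₀ < 1 := by
    have : 0 < θ/θ₀ := div_pos hθ hθ₀
    linarith
  have ha0 : 0 < a := Real.sqrt_pos.mpr hfrac
  have ha1 : a < 1 := by
    have := Real.sqrt_lt_sqrt hfrac.le hfrac1
    simpa [Real.sqrt_one] using this
  have ha2 : a^2 = 1 - θ/θ₀ := Real.sq_sqrt hfrac.le
  have hderiv_neg : ∀ x ∈ Ioo (0:ℝ) a, deriv (g θ θ₀) x < 0 := by
    intro x hx
    have hx1 : x < 1 := hx.2.trans ha1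
    have hxm1 : (-1:ℝ) < x := by linarith [hx.1]
    rw [deriv_g_eq θ θ₀ hxm1 hx1]
    have hx2 : x^2 < 1 - θ/θ₀ := by nlinarith [hx.1, hx.2, ha2, ha0]
    have h12 : 0 < 1 - x^2 := by nlinarith
    have hdiv : θ₀ * (θ/θ₀) = θ := by field_simp
    have k1 : θ₀ * x^2 < θ₀ - θ := by
      have := mul_lt_mul_of_pos_left hx2 hθ₀
      rw [mul_sub, hdiv] at this
      linarith
    rw [sub_neg, div_lt_iff₀ h12]
    nlinarith [k1]
  have hderiv_pos : ∀ x ∈ Ioo a 1, 0 < deriv (g θ θ₀) x := by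
    intro x hx
    have hxm1 : (-1:ℝ) < x := by linarith [hx.1, ha0]
    rw [deriv_g_eq θ θ₀ hxm1 hx.2]
    have hx2 : 1 - θ/θ₀ < x^2 := by nlinarith [hx.1, hx.2, ha2, ha0]
    have hx0 : 0 < x := ha0.trans hx.1
    have h12 : 0 < 1 - x^2 := by
      nlinarith [mul_pos (by linarith [hx.2] : (0:ℝ) < 1 - x) (by linarith : (0:ℝ) < 1 + x)]
    have hdiv : θ₀ * (θ/θ₀) = θ := by field_simp
    have k2 : θ₀ - θ < θ₀ * x^2 := by
      have := mul_lt_mul_of_pos_left hx2 hθ₀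
      rw [mul_sub, hdiv] at this
      linarith
    rw [sub_pos, lt_div_iff₀ h12]
    nlinarith [k2]
  have g_anti : StrictAntiOn (g θ θ₀) (Icc 0 a) :=
    strictAntiOn_of_deriv_neg (convex_Icc _ _)
      (contOn_g θ θ₀ (fun x hx => ⟨by linarith [hx.1], lt_of_le_of_lt hx.2 ha1⟩))
      (by rw [interior_Icc]; exact hderiv_neg)
  have g_mono : StrictMonoOn (g θ θ₀) (Ico a 1) :=
    strictMonoOn_of_deriv_pos (convex_Ico _ _)
      (contOn_g θ θ₀ (fun x hx => ⟨by linarith [hx.1, ha0], hx.2⟩))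
      (by rw [interior_Ico]; exact hderiv_pos)
  set E := Real.exp (2*θ₀/θ) with hE_def
  have hE1 : 1 < E := by
    rw [hE_def, show (1:ℝ) = Real.exp 0 from (Real.exp_zero).symm]
    exact Real.exp_lt_exp.mpr (by positivity)
  set b := (E-1)/(E+1) with hb_def
  have hEp : 0 < E + 1 := by linarith
  have hb0 : 0 < b := div_pos (by linarith) hEp
  have hb1 : b < 1 := (div_lt_one hEp).mpr (by linarith)
  have h1pb : 1 + b = 2*E/(E+1) := by rw [hb_def]; field_simp; ring
  have h1mb : 1 - b = 2/(E+1) := by rw [hb_def]; field_simp; ring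
  have hgb : 0 < g θ θ₀ b := by
    have hlog : Real.log (1+b) - Real.log (1-b) = 2*θ₀/θ := by
      rw [h1pb, h1mb, ← Real.log_div (by positivity) (by positivity)]
      have h2 : 2*E/(E+1) / (2/(E+1)) = E := by field_simp
      rw [h2, hE_def, Real.log_exp]
    have hc : (θ/2) * (2*θ₀/θ) = θ₀ := by field_simp
    simp only [g, hlog, hc]
    nlinarith [hb1, hθ₀]
  have hga : g θ θ₀ a < 0 := by
    have := g_anti ⟨le_rfl, ha0.le⟩ ⟨ha0.le, le_rfl⟩ ha0
    rwa [g_zero] at this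
  have hab : a < b := by
    by_contra h
    push_neg at h
    have := g_anti ⟨le_rfl, ha0.le⟩ ⟨hb0.le, h⟩ hb0
    rw [g_zero] at this
    linarith
  have hsub : Icc a b ⊆ Ioo (-1:ℝ) 1 :=
    fun x hx => ⟨by linarith [hx.1, ha0], lt_of_le_of_lt hx.2 hb1⟩
  obtain ⟨rs, hrs, hgrs⟩ :=
    intermediate_value_Ioo hab.le (contOn_g θ θ₀ hsub) (⟨hga, hgb⟩ : (0:ℝ) ∈ Ioo _ _)
  have hrs0 : 0 < rs := ha0.trans hrs.1
  have hrs1 : rs < 1 := hrs.2.trans hb1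
  have gneg : ∀ x, 0 < x → x < rs → g θ θ₀ x < 0 := by
    intro x hx0 hxr
    rcases le_or_gt x a with h | h
    · have := g_anti ⟨le_rfl, ha0.le⟩ ⟨hx0.le, h⟩ hx0
      rwa [g_zero] at this
    · have := g_mono ⟨h.le, by linarith⟩ ⟨hrs.1.le, hrs1⟩ hxr
      rwa [hgrs] at this
  have gpos : ∀ x, rs < x → x < 1 → 0 < g θ θ₀ x := by
    intro x hx hx1
    have := g_mono ⟨hrs.1.le, hrs1⟩ ⟨(hrs.1.trans hx).le, hx1⟩ hx
    rwa [hgrs] at this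
  have f_anti : StrictAntiOn (f θ θ₀) (Icc 0 rs) :=
    strictAntiOn_of_deriv_neg (convex_Icc _ _)
      (contOn_f θ θ₀ (fun x hx => ⟨by linarith [hx.1], lt_of_le_of_lt hx.2 hrs1⟩))
      (by rw [interior_Icc]
          intro x hx
          rw [(hasDerivAt_f θ θ₀ (by linarith [hx.1] : (-1:ℝ) < x) (hx.2.trans hrs1)).deriv]
          exact gneg x hx.1 hx.2)
  have f_mono : StrictMonoOn (f θ θ₀) (Ico rs 1) :=
    strictMonoOn_of_deriv_pos (convex_Ico _ _)
      (contOn_f θ θ₀ (fun x hx => ⟨by linarith [hx.1, hrs0], hx.2⟩))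
      (by rw [interior_Ico]
          intro x hx
          rw [(hasDerivAt_f θ θ₀ (by linarith [hrs0, hx.1]) hx.2).deriv]
          exact gpos x hx.1 hx.2)
  have key : ∀ s, 0 ≤ s → s < 1 → s ≠ rs → f θ θ₀ rs < f θ θ₀ s := by
    intro s hs0 hs1 hne
    rcases lt_or_gt_of_ne hne with h | h
    · exact f_anti ⟨hs0, h.le⟩ ⟨hrs0.le, le_rfl⟩ h
    · exact f_mono ⟨le_rfl, hrs1⟩ ⟨h.le, hs1⟩ h
  have habs : ∀ r : ℝ, f θ θ₀ r = f θ θ₀ |r| := by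
    intro r
    rcases abs_cases r with ⟨h, _⟩ | ⟨h, _⟩
    · rw [h]
    · rw [h, f_even]
  refine ⟨rs, ⟨hrs0, hrs1⟩, ?_, ?_, ?_, ?_⟩
  · intro r hr
    show f θ θ₀ rs ≤ f θ θ₀ r
    rw [habs r]
    rcases eq_or_ne (|r|) rs with h | h
    · rw [h]
    · exact (key _ (abs_nonneg r) (abs_lt.mpr ⟨hr.1, hr.2⟩) h).le
  · exact f_even θ θ₀ rs
  · intro r hr heq
    have heq' : f θ θ₀ r = f θ θ₀ rs := heq
    have hrabs : |r| = rs := by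
      by_contra hne
      have := key (|r|) (abs_nonneg r) (abs_lt.mpr ⟨hr.1, hr.2⟩) hne
      rw [← habs r, heq'] at this
      exact lt_irrefl _ this
    rcases abs_cases r with ⟨h, _⟩ | ⟨h, _⟩
    · left; rw [← h]; exact hrabs
    · right; rw [h] at hrabs; linarith
  · intro r hr
    show -θ₀ ≤ iteratedDeriv 2 (f θ θ₀) r
    have hev : deriv (f θ θ₀) =ᶠ[nhds r] g θ θ₀ :=
      Filter.eventuallyEq_of_mem (Ioo_mem_nhds hr.1 hr.2)
        (fun x hx => (hasDerivAt_f θ θ₀ hx.1 hx.2).deriv)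
    rw [show (2:ℕ) = 1 + 1 from rfl, iteratedDeriv_succ, iteratedDeriv_one,
      Filter.EventuallyEq.deriv_eq hev, deriv_g_eq θ θ₀ hr.1 hr.2]
    have h12 : 0 < 1 - r^2 := by nlinarith [hr.1, hr.2]
    have : 0 < θ / (1 - r^2) := div_pos hθ h12
    linarith
end

section
/- Gyöngy–Krylov characterization of convergence in probability: let X be a Polish space and (Z_n) a sequence of X-valued random variables on a probability space. Then (Z_n) converges in probability (to some random variable) if and only if for every pair of subsequences (Z_{n_k}) and (Z_{n_j}) there exists a further joint subsequence (Z_{n_{k_ℓ}}, Z_{n_{j_ℓ}}) converging in law to a probability measure ν on X × X with ν({(z₁, z₂) : z₁ = z₂}) = 1. -/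
open MeasureTheory Filter Topology
open scoped ENNReal NNReal

set_option linter.unusedSectionVars false

section GyongyKrylovAux

variable {X : Type*} [MetricSpace X] [CompleteSpace X]
    [TopologicalSpace.SeparableSpace X] [MeasurableSpace X] [BorelSpace X]
    {Ω : Type*} [MeasurableSpace Ω] {P : Measure Ω} [IsProbabilityMeasure P]

lemma gk_cauchy_limit (Z : ℕ → Ω → X) (hZ : ∀ n, Measurable (Z n))
    (hcau : ∀ ε : ℝ, 0 < ε → ∀ δ : ℝ≥0∞, 0 < δ → ∃ N, ∀ m ≥ N, ∀ n ≥ N,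
      P {ω | ε ≤ dist (Z m ω) (Z n ω)} ≤ δ) :
    ∃ Zlim : Ω → X, Measurable Zlim ∧ TendstoInMeasure P Z atTop Zlim := by
  haveI : SecondCountableTopology X := UniformSpace.secondCountable_of_separable X
  have H : ∀ k : ℕ, ∃ N, ∀ m ≥ N, ∀ n ≥ N,
      P {ω | (1/2:ℝ)^k ≤ dist (Z m ω) (Z n ω)} ≤ (1/2 : ℝ≥0∞)^k := by
    intro k
    exact hcau _ (by positivity) _ (ENNReal.pow_pos (by norm_num) k)
  choose N hN using H
  set ns : ℕ → ℕ := fun k => Nat.rec (N 0) (fun k ih => max (N (k+1)) (ih + 1)) k with hns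
  have hns_succ : ∀ k, ns (k+1) = max (N (k+1)) (ns k + 1) := fun k => rfl
  have hns_mono : StrictMono ns := by
    apply strictMono_nat_of_lt_succ
    intro k
    rw [hns_succ]
    exact lt_of_lt_of_le (Nat.lt_succ_self _) (le_max_right _ _)
  have hns_ge : ∀ k, N k ≤ ns k := by
    intro k
    cases k with
    | zero => exact le_refl _
    | succ k => rw [hns_succ]; exact le_max_left _ _
  -- Borel–Cantelli
  set E : ℕ → Set Ω := fun k => {ω | (1/2:ℝ)^k ≤ dist (Z (ns (k+1)) ω) (Z (ns k) ω)} with hE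
  have hPE : ∀ k, P (E k) ≤ (1/2 : ℝ≥0∞)^k := fun k =>
    hN k _ (le_trans (hns_ge k) (hns_mono (Nat.lt_succ_self k)).le) _ (hns_ge k)
  have htsum : ∑' k, P (E k) ≠ ∞ := by
    refine ne_top_of_le_ne_top ?_ (ENNReal.tsum_le_tsum hPE)
    rw [ENNReal.tsum_geometric]
    simp
  have hae : ∀ᵐ ω ∂P, ∃ x : X, Tendsto (fun k => Z (ns k) ω) atTop (𝓝 x) := by
    have hlimsup := measure_limsup_atTop_eq_zero (μ := P) htsum
    have hae0 : ∀ᵐ ω ∂P, ω ∉ limsup E atTop := by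
      rw [ae_iff]
      simpa using hlimsup
    filter_upwards [hae0] with ω hω
    rw [mem_limsup_iff_frequently_mem, not_frequently] at hω
    rw [eventually_atTop] at hω
    obtain ⟨K, hK⟩ := hω
    have hcs : CauchySeq (fun k => Z (ns k) ω) := by
      rw [← cauchySeq_shift K]
      apply cauchySeq_of_dist_le_of_summable (fun k => (1/2:ℝ)^K * (1/2)^k)
      · intro n
        have h1 := hK (n + K) (Nat.le_add_left _ _)
        simp only [E, Set.mem_setOf_eq, not_le] at h1
        rw [show n.succ + K = n + K + 1 from by omega, dist_comm]
        calc dist (Z (ns (n + K + 1)) ω) (Z (ns (n + K)) ω)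
            ≤ (1/2:ℝ)^(n+K) := h1.le
          _ = (1/2:ℝ)^K * (1/2)^n := by rw [pow_add]; ring
      · exact (summable_geometric_two).mul_left _
    exact cauchySeq_tendsto_of_complete hcs
  obtain ⟨Zlim, hZlim_meas, hZlim_tendsto⟩ :=
    measurable_limit_of_tendsto_metrizable_ae (fun k => (hZ (ns k)).aemeasurable) hae
  refine ⟨Zlim, hZlim_meas, ?_⟩
  have hsubTIM : TendstoInMeasure P (fun k => Z (ns k)) atTop Zlim :=
    tendstoInMeasure_of_tendsto_ae (fun k => (hZ (ns k)).aestronglyMeasurable) hZlim_tendsto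
  rw [tendstoInMeasure_iff_dist]
  intro ε hε
  rw [ENNReal.tendsto_atTop_zero]
  intro δ hδ
  obtain ⟨N₁, hN₁⟩ := hcau (ε/2) (by positivity) (δ/2) (ENNReal.half_pos hδ.ne')
  have h2 := tendstoInMeasure_iff_dist.mp hsubTIM (ε/2) (by positivity)
  rw [ENNReal.tendsto_atTop_zero] at h2
  obtain ⟨K₂, hK₂⟩ := h2 (δ/2) (ENNReal.half_pos hδ.ne')
  set k₀ := max K₂ N₁ with hk₀
  refine ⟨N₁, fun m hm => ?_⟩
  have hsub : {ω | ε ≤ dist (Z m ω) (Zlim ω)} ⊆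
      {ω | ε/2 ≤ dist (Z m ω) (Z (ns k₀) ω)} ∪ {ω | ε/2 ≤ dist (Z (ns k₀) ω) (Zlim ω)} := by
    intro ω hω
    simp only [Set.mem_setOf_eq, Set.mem_union] at hω ⊢
    by_contra hc
    push_neg at hc
    have := dist_triangle (Z m ω) (Z (ns k₀) ω) (Zlim ω)
    linarith [hc.1, hc.2]
  calc P {ω | ε ≤ dist (Z m ω) (Zlim ω)}
      ≤ P ({ω | ε/2 ≤ dist (Z m ω) (Z (ns k₀) ω)} ∪ {ω | ε/2 ≤ dist (Z (ns k₀) ω) (Zlim ω)}) :=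
        measure_mono hsub
    _ ≤ P {ω | ε/2 ≤ dist (Z m ω) (Z (ns k₀) ω)} + P {ω | ε/2 ≤ dist (Z (ns k₀) ω) (Zlim ω)} :=
        measure_union_le _ _
    _ ≤ δ/2 + δ/2 := by
        gcongr
        · exact hN₁ m hm _ (le_trans (le_trans (le_max_right _ _) hns_mono.le_apply) le_rfl)
        · exact hK₂ k₀ (le_max_left _ _)
    _ = δ := ENNReal.add_halves δ

lemma gk_tim_prod {Z₁ Z₂ : ℕ → Ω → X} {g₁ g₂ : Ω → X}
    (h₁ : TendstoInMeasure P Z₁ atTop g₁) (h₂ : TendstoInMeasure P Z₂ atTop g₂) :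
    TendstoInMeasure P (fun n ω => (Z₁ n ω, Z₂ n ω)) atTop (fun ω => (g₁ ω, g₂ ω)) := by
  rw [tendstoInMeasure_iff_dist] at h₁ h₂ ⊢
  intro ε hε
  have hsub : ∀ i, {ω | ε ≤ dist ((Z₁ i ω, Z₂ i ω) : X × X) (g₁ ω, g₂ ω)} ⊆
      {ω | ε ≤ dist (Z₁ i ω) (g₁ ω)} ∪ {ω | ε ≤ dist (Z₂ i ω) (g₂ ω)} := by
    intro i ω hω
    simp only [Set.mem_setOf_eq, Prod.dist_eq, le_max_iff] at hω
    exact hω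
  have hlim : Tendsto (fun i => P {ω | ε ≤ dist (Z₁ i ω) (g₁ ω)}
      + P {ω | ε ≤ dist (Z₂ i ω) (g₂ ω)}) atTop (𝓝 0) := by
    have := (h₁ ε hε).add (h₂ ε hε)
    simpa using this
  refine tendsto_of_tendsto_of_tendsto_of_le_of_le tendsto_const_nhds hlim
    (fun i => zero_le') (fun i => ?_)
  exact (measure_mono (hsub i)).trans (measure_union_le _ _)

lemma gk_tim_comp {Z : ℕ → Ω → X} {g : Ω → X} (h : TendstoInMeasure P Z atTop g)
    {k : ℕ → ℕ} (hk : StrictMono k) : TendstoInMeasure P (fun n => Z (k n)) atTop g :=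
  fun ε hε => (h ε hε).comp hk.tendsto_atTop

lemma gk_forward (Z : ℕ → Ω → X) (hZ : ∀ n, Measurable (Z n))
    (Zlim : Ω → X) (hZlim : Measurable Zlim) (htim : TendstoInMeasure P Z atTop Zlim)
    (k j : ℕ → ℕ) (hk : StrictMono k) (hj : StrictMono j) :
    ∃ (l : ℕ → ℕ) (ν : Measure (X × X)), StrictMono l ∧
        IsProbabilityMeasure ν ∧
        ν {q : X × X | q.1 = q.2} = 1 ∧
        ∀ F : BoundedContinuousFunction (X × X) ℝ,
          Tendsto (fun m => ∫ ω, F (Z (k (l m)) ω, Z (j (l m)) ω) ∂P)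
            atTop (𝓝 (∫ q, F q ∂ν)) := by
  haveI : SecondCountableTopology X := UniformSpace.secondCountable_of_separable X
  set φ : Ω → X × X := fun ω => (Zlim ω, Zlim ω) with hφ
  have hφm : Measurable φ := hZlim.prodMk hZlim
  refine ⟨id, P.map φ, strictMono_id, Measure.isProbabilityMeasure_map hφm.aemeasurable, ?_, ?_⟩
  · rw [Measure.map_apply hφm (isClosed_eq continuous_fst continuous_snd).measurableSet]
    simp [φ]
  · intro F
    have hmap : ∫ q, F q ∂(P.map φ) = ∫ ω, F (φ ω) ∂P :=
      integral_map hφm.aemeasurable F.continuous.aestronglyMeasurable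
    rw [hmap]
    -- pair sequence converges in measure
    have hW : TendstoInMeasure P (fun m ω => (Z (k m) ω, Z (j m) ω)) atTop φ :=
      gk_tim_prod (gk_tim_comp htim hk) (gk_tim_comp htim hj)
    simp only [id]
    apply tendsto_of_subseq_tendsto
    intro ns hns
    have hWns : TendstoInMeasure P (fun m ω => (Z (k (ns m)) ω, Z (j (ns m)) ω)) atTop φ :=
      fun ε hε => (hW ε hε).comp hns
    obtain ⟨ms, hms_mono, hms_ae⟩ := hWns.exists_seq_tendsto_ae
    refine ⟨ms, ?_⟩
    apply tendsto_integral_of_dominated_convergence (fun _ => ‖F‖)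
    · intro n
      exact (F.continuous.measurable.comp ((hZ _).prodMk (hZ _))).aestronglyMeasurable
    · exact integrable_const _
    · intro n
      exact Eventually.of_forall fun ω => F.norm_coe_le_norm _
    · filter_upwards [hms_ae] with ω hω
      exact (F.continuous.tendsto _).comp hω

lemma gk_backward (Z : ℕ → Ω → X) (hZ : ∀ n, Measurable (Z n))
    (h : ∀ k j : ℕ → ℕ, StrictMono k → StrictMono j →
      ∃ (l : ℕ → ℕ) (ν : Measure (X × X)), StrictMono l ∧
        IsProbabilityMeasure ν ∧
        ν {q : X × X | q.1 = q.2} = 1 ∧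
        ∀ F : BoundedContinuousFunction (X × X) ℝ,
          Tendsto (fun m => ∫ ω, F (Z (k (l m)) ω, Z (j (l m)) ω) ∂P)
            atTop (𝓝 (∫ q, F q ∂ν))) :
    ∀ ε : ℝ, 0 < ε → ∀ δ : ℝ≥0∞, 0 < δ → ∃ N, ∀ m ≥ N, ∀ n ≥ N,
      P {ω | ε ≤ dist (Z m ω) (Z n ω)} ≤ δ := by
  by_contra hc
  push_neg at hc
  obtain ⟨ε, hε, δ, hδ, hbad⟩ := hc
  choose m' hm' n' hn' hP using hbad
  -- build strictly increasing index sequences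
  set b : ℕ → ℕ := fun i => Nat.rec 0 (fun _ ih => max (m' ih) (n' ih) + 1) i with hb
  have hb_succ : ∀ i, b (i+1) = max (m' (b i)) (n' (b i)) + 1 := fun i => rfl
  set k : ℕ → ℕ := fun i => m' (b i) with hkdef
  set j : ℕ → ℕ := fun i => n' (b i) with hjdef
  have hk : StrictMono k := by
    apply strictMono_nat_of_lt_succ
    intro i
    calc k i = m' (b i) := rfl
      _ < max (m' (b i)) (n' (b i)) + 1 := Nat.lt_succ_of_le (le_max_left _ _)
      _ = b (i+1) := (hb_succ i).symm
      _ ≤ m' (b (i+1)) := hm' _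
  have hj : StrictMono j := by
    apply strictMono_nat_of_lt_succ
    intro i
    calc j i = n' (b i) := rfl
      _ < max (m' (b i)) (n' (b i)) + 1 := Nat.lt_succ_of_le (le_max_right _ _)
      _ = b (i+1) := (hb_succ i).symm
      _ ≤ n' (b (i+1)) := hn' _
  have hPkj : ∀ i, δ < P {ω | ε ≤ dist (Z (k i) ω) (Z (j i) ω)} := fun i => hP (b i)
  obtain ⟨l, ν, hl, hνprob, hνdiag, hconv⟩ := h k j hk hj
  -- the test function
  set f : X × X → ℝ := fun q => min (2/ε * dist q.1 q.2) 1 with hfdef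
  have hf_nonneg : ∀ q, 0 ≤ f q := fun q => le_min (by positivity) one_pos.le
  have hf_cont : Continuous f :=
    (continuous_const.mul (continuous_fst.dist continuous_snd)).min continuous_const
  have hf_bdd : ∀ q, ‖f q‖ ≤ 1 := by
    intro q
    rw [Real.norm_eq_abs, abs_le]
    exact ⟨by linarith [hf_nonneg q], min_le_right _ _⟩
  set F : BoundedContinuousFunction (X × X) ℝ :=
    BoundedContinuousFunction.ofNormedAddCommGroup f hf_cont 1 hf_bdd with hFdef
  have hFcoe : ∀ q, F q = f q := fun q => rfl
  -- ∫ F dν = 0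
  have hdiag_ae : ∀ᵐ q ∂ν, q.1 = q.2 := by
    rw [ae_iff]
    have hmeas := (isClosed_eq (continuous_fst (Y := X)) continuous_snd).measurableSet
    have : ({q : X × X | ¬ q.1 = q.2}) = {q : X × X | q.1 = q.2}ᶜ := rfl
    rw [this, measure_compl hmeas (measure_ne_top ν _), hνdiag, measure_univ, tsub_self]
  have hint0 : ∫ q, F q ∂ν = 0 := by
    apply integral_eq_zero_of_ae
    filter_upwards [hdiag_ae] with q hq
    simp [hFcoe, hfdef, hq, dist_self]
  have hδtop : δ ≠ ⊤ := ((hPkj 0).trans_le prob_le_one).ne_top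
  have hδr : 0 < δ.toReal := ENNReal.toReal_pos hδ.ne' hδtop
  -- lower bound on each integral
  have hlow : ∀ i, δ.toReal ≤ ∫ ω, F (Z (k i) ω, Z (j i) ω) ∂P := by
    intro i
    set S : Set Ω := {ω | ε ≤ dist (Z (k i) ω) (Z (j i) ω)} with hSdef
    have hSmeas : MeasurableSet S := measurableSet_le measurable_const ((hZ _).dist (hZ _))
    have hmeasF : AEStronglyMeasurable (fun ω => F (Z (k i) ω, Z (j i) ω)) P :=
      (F.continuous.measurable.comp ((hZ _).prodMk (hZ _))).aestronglyMeasurable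
    have hintF : Integrable (fun ω => F (Z (k i) ω, Z (j i) ω)) P :=
      Integrable.mono' (integrable_const ‖F‖) hmeasF
        (Eventually.of_forall fun ω => F.norm_coe_le_norm _)
    have h1 : δ.toReal ≤ (P S).toReal :=
      ENNReal.toReal_mono (measure_ne_top P S) (hPkj i).le
    have h2 : (P S).toReal ≤ ∫ ω, F (Z (k i) ω, Z (j i) ω) ∂P := by
      have hind : ∫ ω, S.indicator (fun _ => (1:ℝ)) ω ∂P = (P S).toReal := by
        rw [integral_indicator_const _ hSmeas, smul_eq_mul, mul_one, measureReal_def]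
      rw [← hind]
      apply integral_mono ((integrable_const (1:ℝ)).indicator hSmeas) hintF
      intro ω
      by_cases hω : ω ∈ S
      · rw [Set.indicator_of_mem hω]
        show (1:ℝ) ≤ F (Z (k i) ω, Z (j i) ω)
        rw [hFcoe]
        refine le_min ?_ le_rfl
        have hd : ε ≤ dist (Z (k i) ω) (Z (j i) ω) := hω
        have h2e : 2/ε * ε ≤ 2/ε * dist (Z (k i) ω) (Z (j i) ω) :=
          mul_le_mul_of_nonneg_left hd (by positivity)
        have : 2/ε * ε = 2 := by field_simp
        linarith
      · rw [Set.indicator_of_notMem hω]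
        show (0:ℝ) ≤ F (Z (k i) ω, Z (j i) ω)
        rw [hFcoe]
        exact hf_nonneg _
    linarith
  have := ge_of_tendsto (hconv F) (Eventually.of_forall fun m => hlow (l m))
  rw [hint0] at this
  linarith

end GyongyKrylovAux

/-- Gyöngy–Krylov characterisation of convergence in probability on a Polish space `X`:
a sequence `(Z n)` of `X`-valued random variables converges in probability (to some
random variable) if and only if for every pair of subsequences there is a further joint
subsequence converging in law to a probability measure `ν` on `X × X` concentrated on
the diagonal. -/
theorem stmt15 {X : Type*} [MetricSpace X] [CompleteSpace X]
    [TopologicalSpace.SeparableSpace X] [MeasurableSpace X] [BorelSpace X]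
    {Ω : Type*} [MeasurableSpace Ω] (P : Measure Ω) [IsProbabilityMeasure P]
    (Z : ℕ → Ω → X) (hZ : ∀ n, Measurable (Z n)) :
    (∃ Zlim : Ω → X, Measurable Zlim ∧ TendstoInMeasure P Z atTop Zlim) ↔
    (∀ k j : ℕ → ℕ, StrictMono k → StrictMono j →
      ∃ (l : ℕ → ℕ) (ν : Measure (X × X)), StrictMono l ∧
        IsProbabilityMeasure ν ∧
        ν {q : X × X | q.1 = q.2} = 1 ∧
        ∀ F : BoundedContinuousFunction (X × X) ℝ,
          Tendsto (fun m => ∫ ω, F (Z (k (l m)) ω, Z (j (l m)) ω) ∂P)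
            atTop (𝓝 (∫ q, F q ∂ν))) := by
  constructor
  · rintro ⟨Zlim, hZlim, htim⟩ k j hk hj
    exact gk_forward Z hZ Zlim hZlim htim k j hk hj
  · intro h
    exact gk_cauchy_limit Z hZ (gk_backward Z hZ h)
end
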